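/- Fix a positive integer T, reals S₁ > 0, n > 0, ε > 0, and positive weights a₁,…,a_T. The problem of minimizing Σ_{t=1}^T a_t·b_t² over positive reals b₁,…,b_T subject to Σ_{t=1}^T S₁/(n·b_t) = ε is solved by b_t = (Σ_{j=1}^T a_j^{1/3}) / a_t^{1/3} · S₁/(nε), and the minimum value equals (S₁²/(n²ε²))·(Σ_{j=1}^T a_j^{1/3})³. -/

import Mathlib

open Finset

/-- Proposition 4.2: minimizing `Σₜ aₜ bₜ²` over positive `b₁,…,b_T` subject to
`Σₜ S₁/(n bₜ) = ε` is solved by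
`bₜ = (Σⱼ aⱼ^{1/3})/aₜ^{1/3} · S₁/(nε)`, with minimum value
`(S₁²/(n²ε²))·(Σⱼ aⱼ^{1/3})³`. -/
theorem stmt_8 (T : ℕ) (hT : 0 < T) (S₁ n ε : ℝ) (hS₁ : 0 < S₁) (hn : 0 < n)
    (hε : 0 < ε) (a : Fin T → ℝ) (ha : ∀ t, 0 < a t)
    (bopt : Fin T → ℝ)
    (hbopt : ∀ t, bopt t =
      (∑ j, (a j) ^ ((1 : ℝ) / 3)) / (a t) ^ ((1 : ℝ) / 3) * (S₁ / (n * ε))) :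
    (∀ t, 0 < bopt t) ∧
    (∑ t, S₁ / (n * bopt t) = ε) ∧
    (∑ t, a t * (bopt t) ^ 2 =
      S₁ ^ 2 / (n ^ 2 * ε ^ 2) * (∑ j, (a j) ^ ((1 : ℝ) / 3)) ^ 3) ∧
    (∀ b : Fin T → ℝ, (∀ t, 0 < b t) → (∑ t, S₁ / (n * b t) = ε) →
      ∑ t, a t * (bopt t) ^ 2 ≤ ∑ t, a t * (b t) ^ 2) := by
  set x : Fin T → ℝ := fun t => (a t) ^ ((1 : ℝ) / 3) with hx
  have hxpos : ∀ t, 0 < x t := fun t => Real.rpow_pos_of_pos (ha t) _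
  set A : ℝ := ∑ j, x j with hA
  have hApos : 0 < A := by
    apply Finset.sum_pos (fun t _ => hxpos t)
    exact Finset.univ_nonempty_iff.mpr ⟨⟨0, hT⟩⟩
  have hx3 : ∀ t, (x t) ^ (3 : ℕ) = a t := by
    intro t
    rw [hx, ← Real.rpow_natCast ((a t) ^ ((1:ℝ)/3)) 3, ← Real.rpow_mul (ha t).le]
    norm_num
  have hbpos : ∀ t, 0 < bopt t := by
    intro t
    rw [hbopt t]
    have := hxpos t
    positivity
  have hval : ∑ t, a t * (bopt t) ^ 2 = S₁ ^ 2 / (n ^ 2 * ε ^ 2) * A ^ 3 := by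
    have h1 : ∀ t : Fin T, a t * (bopt t) ^ 2 = x t * (A ^ 2 * (S₁ / (n * ε)) ^ 2) := by
      intro t
      have hbo : bopt t = A / x t * (S₁ / (n * ε)) := hbopt t
      rw [hbo, ← hx3 t]
      have h2 := (hxpos t).ne'
      field_simp
    calc ∑ t, a t * (bopt t) ^ 2 = ∑ t, x t * (A ^ 2 * (S₁ / (n * ε)) ^ 2) :=
          Finset.sum_congr rfl fun t _ => h1 t
      _ = A * (A ^ 2 * (S₁ / (n * ε)) ^ 2) := by rw [← Finset.sum_mul]
      _ = S₁ ^ 2 / (n ^ 2 * ε ^ 2) * A ^ 3 := by field_simp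
  refine ⟨hbpos, ?_, hval, ?_⟩
  · -- constraint holds
    have h1 : ∀ t : Fin T, S₁ / (n * bopt t) = x t * ε / A := by
      intro t
      have hbo : bopt t = A / x t * (S₁ / (n * ε)) := hbopt t
      rw [hbo]
      have h2 := hxpos t
      field_simp
    calc ∑ t, S₁ / (n * bopt t) = ∑ t, x t * ε / A :=
          Finset.sum_congr rfl fun t _ => h1 t
      _ = (∑ t, x t) * ε / A := by rw [← Finset.sum_div, ← Finset.sum_mul]
      _ = ε := by field_simp; exact hA.symm
  · -- optimality
    intro b hb hcon
    set P : ℝ := ∑ t, a t * (b t) ^ 2 with hP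
    have hPnn : 0 ≤ P := Finset.sum_nonneg fun t _ => by
      have := ha t; have := hb t; positivity
    set Q : ℝ := ∑ t, 1 / b t with hQ
    have hQval : Q = n * ε / S₁ := by
      have h1 : ∀ t : Fin T, 1 / b t = S₁ / (n * b t) * (n / S₁) := by
        intro t
        have := (hb t).ne'
        field_simp
      rw [hQ]
      calc ∑ t, 1 / b t = ∑ t, S₁ / (n * b t) * (n / S₁) :=
            Finset.sum_congr rfl fun t _ => h1 t
        _ = (∑ t, S₁ / (n * b t)) * (n / S₁) := by rw [← Finset.sum_mul]
        _ = n * ε / S₁ := by rw [hcon]; ring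
    have hQpos : 0 < Q := by rw [hQval]; positivity
    -- Hölder with p = 3, q = 3/2
    have hpq : Real.HolderConjugate 3 (3/2) := Real.holderConjugate_iff.mpr ⟨by norm_num, by norm_num⟩
    have holder := Real.inner_le_Lp_mul_Lq_of_nonneg (univ : Finset (Fin T))
      hpq (f := fun t => (a t * (b t) ^ 2) ^ ((1:ℝ)/3))
      (g := fun t => (1 / b t) ^ ((2:ℝ)/3))
      (fun t _ => by have := ha t; have := hb t; positivity)
      (fun t _ => by have := hb t; positivity)
    have hfg : ∀ t : Fin T, (a t * (b t) ^ 2) ^ ((1:ℝ)/3) * (1 / b t) ^ ((2:ℝ)/3) = x t := by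
      intro t
      have hb' := hb t
      rw [Real.mul_rpow (ha t).le (by positivity),
        ← Real.rpow_natCast (b t) 2, ← Real.rpow_mul hb'.le,
        one_div (b t), ← Real.rpow_neg_one (b t), ← Real.rpow_mul hb'.le, hx]
      rw [mul_assoc, ← Real.rpow_add hb']
      norm_num
    have hf3 : ∀ t : Fin T, ((a t * (b t) ^ 2) ^ ((1:ℝ)/3)) ^ (3:ℝ) = a t * (b t) ^ 2 := by
      intro t
      have := ha t; have := hb t
      rw [← Real.rpow_mul (by positivity)]
      norm_num
    have hg32 : ∀ t : Fin T, ((1 / b t) ^ ((2:ℝ)/3)) ^ ((3:ℝ)/2) = 1 / b t := by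
      intro t
      have := hb t
      rw [← Real.rpow_mul (by positivity)]
      norm_num
    rw [Finset.sum_congr rfl (fun t _ => hfg t),
      Finset.sum_congr rfl (fun t _ => hf3 t),
      Finset.sum_congr rfl (fun t _ => hg32 t)] at holder
    -- holder : A ≤ P ^ (1/3) * Q ^ (1/(3/2))
    have hAP : A ^ 3 ≤ P * Q ^ 2 := by
      have h3 : A ^ 3 ≤ (P ^ ((1:ℝ)/3) * Q ^ ((1:ℝ)/(3/2))) ^ 3 :=
        pow_le_pow_left₀ hApos.le holder 3
      refine h3.trans_eq ?_
      have e1 : (P ^ ((1:ℝ)/3)) ^ (3:ℕ) = P := by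
        rw [← Real.rpow_natCast (P ^ ((1:ℝ)/3)) 3, ← Real.rpow_mul hPnn]
        norm_num
      have e2 : (Q ^ ((1:ℝ)/(3/2))) ^ (3:ℕ) = Q ^ 2 := by
        rw [← Real.rpow_natCast (Q ^ ((1:ℝ)/(3/2))) 3, ← Real.rpow_mul hQpos.le,
          ← Real.rpow_natCast Q 2]
        norm_num
      rw [mul_pow, e1, e2]
    rw [hQval] at hAP
    calc ∑ t, a t * (bopt t) ^ 2 = S₁ ^ 2 / (n ^ 2 * ε ^ 2) * A ^ 3 := hval
      _ ≤ S₁ ^ 2 / (n ^ 2 * ε ^ 2) * (P * (n * ε / S₁) ^ 2) := by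
          have h0 : (0:ℝ) ≤ S₁ ^ 2 / (n ^ 2 * ε ^ 2) := by positivity
          exact mul_le_mul_of_nonneg_left hAP h0
      _ = P := by field_simp
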